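/- Let s: ℂ → ℂ^m∖{0} be holomorphic and suppose ∂²/∂z∂z̄ log‖s‖² = 0 identically on ℂ. Then the induced map [s]: ℂ → ℂP^{m−1} is constant, i.e., s(z) = h(z)·v for some nonvanishing holomorphic function h and a fixed vector v ∈ ℂ^m. -/

import Mathlib

open Complex Finset

/-- Wirtinger derivative ∂/∂z of a function ℂ → ℂ. -/
noncomputable def wdz (f : ℂ → ℂ) (z : ℂ) : ℂ :=
  (fderiv ℝ f z 1 - Complex.I * fderiv ℝ f z Complex.I) / 2

/-- Wirtinger derivative ∂/∂z̄ of a function ℂ → ℂ. -/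
noncomputable def wdzbar (f : ℂ → ℂ) (z : ℂ) : ℂ :=
  (fderiv ℝ f z 1 + Complex.I * fderiv ℝ f z Complex.I) / 2

/-! With `F = ‖s‖²` and `A = ⟨s', s⟩`, Wirtinger calculus gives `∂_z log F = A / F` and
`∂_z̄ ∂_z log F = (F ‖s'‖² - |A|²) / F²`. Flatness is therefore the equality case of
Cauchy–Schwarz, so `s'(z)` is a multiple of `s(z)` at every point and all Wronskians
`s_i' s_j - s_i s_j'` vanish. Near a point where `s_j ≠ 0` the quotients `s_i / s_j` are then
constant, and the identity theorem gives `s = s_j · (s(0) / s_j(0))` on all of `ℂ`. -/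

open ComplexConjugate

section Wirtinger

variable {f g : ℂ → ℂ} {z : ℂ}

lemma wdz_eq {L : ℂ →L[ℝ] ℂ} (h : HasFDerivAt f L z) :
    wdz f z = (L 1 - I * L I) / 2 := by
  rw [wdz, h.fderiv]

lemma wdzbar_eq {L : ℂ →L[ℝ] ℂ} (h : HasFDerivAt f L z) :
    wdzbar f z = (L 1 + I * L I) / 2 := by
  rw [wdzbar, h.fderiv]

lemma wdz_of_differentiableAt (hf : DifferentiableAt ℂ f z) : wdz f z = deriv f z := by
  rw [wdz_eq (hf.hasDerivAt.hasFDerivAt.restrictScalars ℝ)]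
  simp only [ContinuousLinearMap.coe_restrictScalars', ContinuousLinearMap.toSpanSingleton_apply,
    smul_eq_mul]
  linear_combination (-deriv f z / 2) * I_sq

lemma wdzbar_of_differentiableAt (hf : DifferentiableAt ℂ f z) : wdzbar f z = 0 := by
  rw [wdzbar_eq (hf.hasDerivAt.hasFDerivAt.restrictScalars ℝ)]
  simp only [ContinuousLinearMap.coe_restrictScalars', ContinuousLinearMap.toSpanSingleton_apply,
    smul_eq_mul]
  linear_combination (deriv f z / 2) * I_sq

lemma wdz_mul (hf : DifferentiableAt ℝ f z) (hg : DifferentiableAt ℝ g z) :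
    wdz (fun w => f w * g w) z = wdz f z * g z + f z * wdz g z := by
  rw [wdz_eq (hf.hasFDerivAt.fun_mul hg.hasFDerivAt), wdz, wdz]
  simp only [add_apply, smul_apply, smul_eq_mul]
  ring

lemma wdzbar_mul (hf : DifferentiableAt ℝ f z) (hg : DifferentiableAt ℝ g z) :
    wdzbar (fun w => f w * g w) z = wdzbar f z * g z + f z * wdzbar g z := by
  rw [wdzbar_eq (hf.hasFDerivAt.fun_mul hg.hasFDerivAt), wdzbar, wdzbar]
  simp only [add_apply, smul_apply, smul_eq_mul]
  ring

lemma wdzbar_inv (hf : DifferentiableAt ℝ f z) (hz : f z ≠ 0) :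
    wdzbar (fun w => (f w)⁻¹) z = -wdzbar f z / f z ^ 2 := by
  rw [wdzbar_eq (f := fun w => (f w)⁻¹)
    ((hasDerivAt_inv hz).comp_hasFDerivAt z hf.hasFDerivAt), wdzbar]
  simp only [smul_apply, smul_eq_mul]
  ring

lemma hasFDerivAt_conj_comp (hf : DifferentiableAt ℝ f z) :
    HasFDerivAt (fun w => conj (f w)) (conjCLE.toContinuousLinearMap.comp (fderiv ℝ f z)) z :=
  conjCLE.toContinuousLinearMap.hasFDerivAt.comp z hf.hasFDerivAt

lemma differentiableAt_mul_conj (hf : DifferentiableAt ℝ f z) (hg : DifferentiableAt ℝ g z) :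
    DifferentiableAt ℝ (fun w => f w * conj (g w)) z :=
  hf.fun_mul (hasFDerivAt_conj_comp hg).differentiableAt

lemma wdz_conj (hf : DifferentiableAt ℝ f z) :
    wdz (fun w => conj (f w)) z = conj (wdzbar f z) := by
  rw [wdz_eq (hasFDerivAt_conj_comp hf), wdzbar]
  simp only [ContinuousLinearMap.comp_apply, ContinuousLinearEquiv.coe_coe,
    ContinuousAlgEquiv.coeCLE_apply, conjCAE_apply, map_div₀, map_add, map_mul, conj_I, map_ofNat]
  ring

lemma wdzbar_conj (hf : DifferentiableAt ℝ f z) :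
    wdzbar (fun w => conj (f w)) z = conj (wdz f z) := by
  rw [wdzbar_eq (hasFDerivAt_conj_comp hf), wdz]
  simp only [ContinuousLinearMap.comp_apply, ContinuousLinearEquiv.coe_coe,
    ContinuousAlgEquiv.coeCLE_apply, conjCAE_apply, map_div₀, map_sub, map_mul, conj_I, map_ofNat]
  ring

lemma wdz_sum {ι : Type*} (t : Finset ι) {u : ι → ℂ → ℂ}
    (hu : ∀ i ∈ t, DifferentiableAt ℝ (u i) z) :
    wdz (fun w => ∑ i ∈ t, u i w) z = ∑ i ∈ t, wdz (u i) z := by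
  rw [wdz_eq (HasFDerivAt.fun_sum fun i hi => (hu i hi).hasFDerivAt)]
  simp only [_root_.sum_apply, wdz, Finset.mul_sum, ← Finset.sum_sub_distrib, Finset.sum_div]

lemma wdzbar_sum {ι : Type*} (t : Finset ι) {u : ι → ℂ → ℂ}
    (hu : ∀ i ∈ t, DifferentiableAt ℝ (u i) z) :
    wdzbar (fun w => ∑ i ∈ t, u i w) z = ∑ i ∈ t, wdzbar (u i) z := by
  rw [wdzbar_eq (HasFDerivAt.fun_sum fun i hi => (hu i hi).hasFDerivAt)]
  simp only [_root_.sum_apply, wdzbar, Finset.mul_sum, ← Finset.sum_add_distrib, Finset.sum_div]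

lemma wdz_ofReal_comp {F : ℂ → ℝ} {φ : ℝ → ℝ} {φ' : ℝ} (hF : DifferentiableAt ℝ F z)
    (hφ : HasDerivAt φ φ' (F z)) :
    wdz (fun w => (φ (F w) : ℂ)) z = φ' * wdz (fun w => (F w : ℂ)) z := by
  rw [wdz_eq (f := fun w => (φ (F w) : ℂ))
      (ofRealCLM.hasFDerivAt.comp z (hφ.comp_hasFDerivAt z hF.hasFDerivAt)),
    wdz_eq (f := fun w => (F w : ℂ)) (ofRealCLM.hasFDerivAt.comp z hF.hasFDerivAt)]
  simp only [ContinuousLinearMap.comp_apply, smul_apply, smul_eq_mul, ofRealCLM_apply, ofReal_mul]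
  ring

lemma wdz_mul_conj (hf : DifferentiableAt ℂ f z) (hg : DifferentiableAt ℂ g z) :
    wdz (fun w => f w * conj (g w)) z = deriv f z * conj (g z) := by
  rw [wdz_mul (hf.restrictScalars ℝ)
    (hasFDerivAt_conj_comp (hg.restrictScalars ℝ)).differentiableAt,
    wdz_of_differentiableAt hf, wdz_conj (hg.restrictScalars ℝ), wdzbar_of_differentiableAt hg]
  simp

lemma wdzbar_mul_conj (hf : DifferentiableAt ℂ f z) (hg : DifferentiableAt ℂ g z) :
    wdzbar (fun w => f w * conj (g w)) z = f z * conj (deriv g z) := by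
  rw [wdzbar_mul (hf.restrictScalars ℝ)
    (hasFDerivAt_conj_comp (hg.restrictScalars ℝ)).differentiableAt,
    wdzbar_of_differentiableAt hf, wdzbar_conj (hg.restrictScalars ℝ), wdz_of_differentiableAt hg]
  simp

end Wirtinger

section NormSq

variable {ι : Type*} [Fintype ι]

lemma sum_normSq_pos {v : ι → ℂ} (hv : v ≠ 0) : 0 < ∑ i, normSq (v i) := by
  obtain ⟨i, hi⟩ := Function.ne_iff.mp hv
  exact Finset.sum_pos' (fun j _ => normSq_nonneg _) ⟨i, mem_univ i, normSq_pos.mpr hi⟩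

lemma ofReal_sum_normSq (v : ι → ℂ) : ((∑ i, normSq (v i) : ℝ) : ℂ) = ∑ i, v i * conj (v i) := by
  simp only [ofReal_sum, mul_conj]

lemma exists_eq_mul_of_sum_normSq_mul_eq {a d : ι → ℂ} (ha : a ≠ 0)
    (h : (∑ i, normSq (a i)) * (∑ i, normSq (d i)) = normSq (∑ i, d i * conj (a i))) :
    ∃ c : ℂ, ∀ i, d i = c * a i := by
  by_cases hd : d = 0
  · exact ⟨0, by simp [hd]⟩
  set x : EuclideanSpace ℂ ι := WithLp.toLp 2 a
  set y : EuclideanSpace ℂ ι := WithLp.toLp 2 d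
  have hsq : ‖inner ℂ x y‖ ^ 2 = (‖x‖ * ‖y‖) ^ 2 := by
    simp only [mul_pow, EuclideanSpace.norm_sq_eq, EuclideanSpace.inner_eq_star_dotProduct,
      dotProduct, ← normSq_eq_norm_sq]
    exact h.symm
  obtain ⟨c, -, hc⟩ := (norm_inner_eq_norm_iff (by simpa [x] using ha) (by simpa [y] using hd)).mp
    ((sq_eq_sq₀ (norm_nonneg _) (by positivity)).mp hsq)
  exact ⟨c, fun i => congrFun (congrArg WithLp.ofLp hc) i⟩

variable {s : ℂ → ι → ℂ}

lemma wdz_log_sum_normSq {z : ℂ} (hs : ∀ i, DifferentiableAt ℂ (fun w => s w i) z) (hz : s z ≠ 0) :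
    wdz (fun w => (Real.log (∑ i, normSq (s w i)) : ℂ)) z =
      (∑ i, deriv (fun w => s w i) z * conj (s z i)) / (∑ i, normSq (s z i) : ℝ) := by
  have hF : DifferentiableAt ℝ (fun w => ∑ i, normSq (s w i)) z := by
    simp only [normSq_eq_norm_sq]
    exact DifferentiableAt.fun_sum fun i _ => ((hs i).restrictScalars ℝ).norm_sq ℝ
  rw [wdz_ofReal_comp hF (Real.hasDerivAt_log (sum_normSq_pos hz).ne'), div_eq_inv_mul,
    funext fun w => ofReal_sum_normSq (s w),
    wdz_sum _ fun i _ =>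
      differentiableAt_mul_conj ((hs i).restrictScalars ℝ) ((hs i).restrictScalars ℝ)]
  simp only [wdz_mul_conj (hs _) (hs _), ofReal_inv]

lemma wdzbar_wdz_log_sum_normSq (hs : ∀ i, Differentiable ℂ (fun w => s w i))
    (hnz : ∀ z, s z ≠ 0) (z : ℂ) :
    wdzbar (wdz (fun w => (Real.log (∑ i, normSq (s w i)) : ℂ))) z =
      (((∑ i, normSq (s z i)) * (∑ i, normSq (deriv (fun w => s w i) z)) -
        normSq (∑ i, deriv (fun w => s w i) z * conj (s z i)) : ℝ) : ℂ) /
        ((∑ i, normSq (s z i) : ℝ) : ℂ) ^ 2 := by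
  set F : ℂ → ℂ := fun w => ((∑ i, normSq (s w i) : ℝ) : ℂ) with hF
  set A : ℂ → ℂ := fun w => ∑ i, deriv (fun w => s w i) w * conj (s w i) with hA
  have hsR : ∀ i, Differentiable ℝ (fun w => s w i) := fun i => (hs i).restrictScalars ℝ
  have hs'R : ∀ i, Differentiable ℝ (deriv fun w => s w i) :=
    fun i => (hs i).deriv.restrictScalars ℝ
  have hFR : Differentiable ℝ F := by
    rw [hF, funext fun w => ofReal_sum_normSq (s w)]
    exact fun w => DifferentiableAt.fun_sum fun i _ => differentiableAt_mul_conj (hsR i w) (hsR i w)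
  have hAR : Differentiable ℝ A :=
    fun w => DifferentiableAt.fun_sum fun i _ => differentiableAt_mul_conj (hs'R i w) (hsR i w)
  have hFz : F z ≠ 0 := ofReal_ne_zero.mpr (sum_normSq_pos (hnz z)).ne'
  have hwdzbarA : wdzbar A z = ((∑ i, normSq (deriv (fun w => s w i) z) : ℝ) : ℂ) := by
    rw [wdzbar_sum _ fun i _ => differentiableAt_mul_conj (hs'R i z) (hsR i z)]
    simp only [wdzbar_mul_conj ((hs _).deriv _) (hs _ _), mul_conj, ofReal_sum]
  have hwdzbarF : wdzbar F z = conj (A z) := by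
    rw [hF, funext fun w => ofReal_sum_normSq (s w),
      wdzbar_sum _ fun i _ => differentiableAt_mul_conj (hsR i z) (hsR i z)]
    simp only [wdzbar_mul_conj (hs _ _) (hs _ _), hA, map_sum]
    exact Finset.sum_congr rfl fun i _ => by rw [map_mul, conj_conj, mul_comm]
  have hwdz : wdz (fun w => (Real.log (∑ i, normSq (s w i)) : ℂ)) = fun w => A w * (F w)⁻¹ :=
    funext fun w => by rw [wdz_log_sum_normSq (fun i => hs i w) (hnz w), div_eq_mul_inv]
  rw [hwdz, wdzbar_mul (hAR z) ((hFR z).fun_inv hFz), wdzbar_inv (hFR z) hFz, hwdzbarA, hwdzbarF,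
    ofReal_sub, ofReal_mul]
  change _ = (F z * _ - (normSq (A z) : ℂ)) / F z ^ 2
  rw [← mul_conj]
  field_simp
  ring

end NormSq

lemma mul_eq_mul_of_deriv_mul_eq {f g : ℂ → ℂ} (hf : Differentiable ℂ f) (hg : Differentiable ℂ g)
    (hW : ∀ z, deriv f z * g z = f z * deriv g z) {z₀ : ℂ} (hg₀ : g z₀ ≠ 0) (z : ℂ) :
    f z * g z₀ = g z * f z₀ := by
  obtain ⟨ε, hε, hball⟩ :=
    Metric.isOpen_iff.mp (isOpen_ne_fun hg.continuous continuous_const) z₀ hg₀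
  have hconst : ∀ w ∈ Metric.ball z₀ ε, f w / g w = f z₀ / g z₀ := by
    intro v hv
    refine Metric.isOpen_ball.is_const_of_deriv_eq_zero (convex_ball z₀ ε).isPreconnected
      (fun w hw => ((hf w).div (hg w) (hball hw)).differentiableWithinAt) (fun w hw => ?_) hv
      (Metric.mem_ball_self hε)
    rw [deriv_div (hf w) (hg w) (hball hw), hW w, sub_self, zero_div, Pi.zero_apply]
  have hev : (fun z => f z * g z₀) =ᶠ[nhds z₀] fun z => g z * f z₀ := by
    filter_upwards [Metric.ball_mem_nhds z₀ hε] with w hw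
    linear_combination (div_eq_div_iff (hball hw) hg₀).mp (hconst w hw)
  exact congrFun ((analyticOnNhd_univ_iff_differentiable.mpr (hf.mul_const _)).eq_of_eventuallyEq
    (analyticOnNhd_univ_iff_differentiable.mpr (hg.mul_const _)) hev) z

/-- If `s : ℂ → ℂ^m∖{0}` is holomorphic and `∂²/∂z∂z̄ log‖s‖² ≡ 0`, then the induced map
to `ℂP^{m−1}` is constant: `s(z) = h(z)·v` for a nonvanishing holomorphic `h` and fixed `v`. -/
theorem projective_constant_of_flat (m : ℕ) (s : ℂ → Fin m → ℂ)
    (hs : ∀ i, Differentiable ℂ (fun z => s z i))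
    (hnz : ∀ z, s z ≠ 0)
    (hflat : ∀ z : ℂ,
      wdzbar (wdz (fun w => (Real.log (∑ i, Complex.normSq (s w i)) : ℂ))) z = 0) :
    ∃ (h : ℂ → ℂ) (v : Fin m → ℂ), Differentiable ℂ h ∧ (∀ z, h z ≠ 0) ∧
      ∀ z i, s z i = h z * v i := by
  have hW : ∀ i j z, deriv (fun w => s w i) z * s z j = s z i * deriv (fun w => s w j) z := by
    intro i j z
    have hCS := hflat z
    rw [wdzbar_wdz_log_sum_normSq hs hnz z, div_eq_zero_iff, ofReal_eq_zero, sub_eq_zero] at hCS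
    obtain ⟨c, hc⟩ := exists_eq_mul_of_sum_normSq_mul_eq (d := fun i => deriv (fun w => s w i) z)
      (hnz z) (hCS.resolve_right (pow_ne_zero 2 (ofReal_ne_zero.mpr (sum_normSq_pos (hnz z)).ne')))
    rw [hc i, hc j]
    ring
  obtain ⟨j, hj⟩ : ∃ j, s 0 j ≠ 0 := Function.ne_iff.mp (hnz 0)
  have hprop : ∀ z i, s z i * s 0 j = s z j * s 0 i := fun z i =>
    mul_eq_mul_of_deriv_mul_eq (hs i) (hs j) (hW i j) hj z
  refine ⟨fun z => s z j, fun i => s 0 i / s 0 j, hs j, fun z hz => hnz z ?_, fun z i => ?_⟩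
  · funext i
    simpa [hz, hj] using hprop z i
  · rw [mul_div_assoc', eq_div_iff hj, hprop]
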